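/- arXiv:1811.12711 — 10 statements merged into one kernel-verified Lean document; each statement's English description precedes it below -/
import Mathlib

section
/- Let ε > 0 and define φ^ε(z) = 2z·ln(ε + |z|) for z ∈ ℂ (i.e. φ^ε(z) = z·ln((ε+|z|)²)). Then for all z₁, z₂ ∈ ℂ, |Im((φ^ε(z₁) − φ^ε(z₂))·(conj(z₁) − conj(z₂)))| ≤ 2·|z₁ − z₂|². -/
/-!
Writing `Lⱼ = log (ε + |zⱼ|)`, the real parts cancel and the quantity equals
`2 (L₂ - L₁) Im (z₁ z̄₂)`. Since `Im (z₁ z̄₂) = Im ((z₁ - z₂) z̄₂) = Im (z₁ (z̄₂ - z̄₁))`, it is at most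
`|z₁ - z₂| m` with `m = min |z₁| |z₂|`, while `log` is `1 / (ε + m)`-Lipschitz on `[ε + m, ∞)`, so
`|L₁ - L₂| ≤ |z₁ - z₂| / (ε + m)`. The product is `2 |z₁ - z₂|² m / (ε + m) ≤ 2 |z₁ - z₂|²`.
-/

open ComplexConjugate

namespace Complex

theorem im_two_mul_ofReal_sub_mul_conj_sub (z₁ z₂ : ℂ) (a b : ℝ) :
    ((2 * z₁ * (a : ℂ) - 2 * z₂ * (b : ℂ)) * (conj z₁ - conj z₂)).im =
      2 * (b - a) * (z₁ * conj z₂).im := by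
  simp only [mul_im, mul_re, sub_im, sub_re, conj_re, conj_im, ofReal_re, ofReal_im,
    re_ofNat, im_ofNat]
  ring

theorem abs_im_mul_conj_le_norm_sub_mul_norm_right (z w : ℂ) :
    |(z * conj w).im| ≤ ‖z - w‖ * ‖w‖ := by
  have hsame : (z * conj w).im = ((z - w) * conj w).im := by
    rw [sub_mul, sub_im, mul_conj, ofReal_im, sub_zero]
  calc |(z * conj w).im| = |((z - w) * conj w).im| := by rw [hsame]
    _ ≤ ‖(z - w) * conj w‖ := abs_im_le_norm _
    _ = ‖z - w‖ * ‖w‖ := by rw [norm_mul, norm_conj]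

theorem abs_im_mul_conj_le_norm_sub_mul_min (z w : ℂ) :
    |(z * conj w).im| ≤ ‖z - w‖ * min ‖z‖ ‖w‖ := by
  have hswap : |(z * conj w).im| = |(w * conj z).im| := by
    rw [← abs_neg, ← conj_im, map_mul, conj_conj, mul_comm]
  rcases min_cases ‖z‖ ‖w‖ with ⟨hmin, -⟩ | ⟨hmin, -⟩
  · rw [hmin, hswap, norm_sub_rev]
    exact abs_im_mul_conj_le_norm_sub_mul_norm_right w z
  · rw [hmin]
    exact abs_im_mul_conj_le_norm_sub_mul_norm_right z w

end Complex

namespace Real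

theorem log_sub_log_le_sub_div {x y : ℝ} (hx : 0 < x) (hxy : x ≤ y) :
    log y - log x ≤ (y - x) / x := by
  have hy : 0 < y := hx.trans_le hxy
  calc log y - log x = log (y / x) := (log_div hy.ne' hx.ne').symm
    _ ≤ y / x - 1 := log_le_sub_one_of_pos (div_pos hy hx)
    _ = (y - x) / x := by field_simp

theorem abs_log_sub_log_le_abs_sub_div_min {x y : ℝ} (hx : 0 < x) (hy : 0 < y) :
    |log x - log y| ≤ |x - y| / min x y := by
  rcases le_total x y with hxy | hyx
  · rw [abs_sub_comm, abs_sub_comm x, min_eq_left hxy,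
      abs_of_nonneg (sub_nonneg.2 (log_le_log hx hxy)), abs_of_nonneg (sub_nonneg.2 hxy)]
    exact log_sub_log_le_sub_div hx hxy
  · rw [min_eq_right hyx, abs_of_nonneg (sub_nonneg.2 (log_le_log hy hyx)),
      abs_of_nonneg (sub_nonneg.2 hyx)]
    exact log_sub_log_le_sub_div hy hyx

end Real

theorem stmt_0 (ε : ℝ) (hε : 0 < ε) (z₁ z₂ : ℂ) :
    |((2 * z₁ * (Real.log (ε + ‖z₁‖) : ℂ)
        - 2 * z₂ * (Real.log (ε + ‖z₂‖) : ℂ))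
      * (starRingEnd ℂ z₁ - starRingEnd ℂ z₂)).im|
      ≤ 2 * ‖z₁ - z₂‖ ^ 2 := by
  set d := ‖z₁ - z₂‖
  set m := min ‖z₁‖ ‖z₂‖
  have hm : 0 ≤ m := le_min (norm_nonneg _) (norm_nonneg _)
  have him := Complex.abs_im_mul_conj_le_norm_sub_mul_min z₁ z₂
  have hlog : |Real.log (ε + ‖z₁‖) - Real.log (ε + ‖z₂‖)| ≤ d / (ε + m) := by
    have h := Real.abs_log_sub_log_le_abs_sub_div_min (x := ε + ‖z₁‖) (y := ε + ‖z₂‖)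
      (by positivity) (by positivity)
    rw [add_sub_add_left_eq_sub, min_add_add_left] at h
    exact h.trans (by gcongr; exact abs_norm_sub_norm_le z₁ z₂)
  rw [Complex.im_two_mul_ofReal_sub_mul_conj_sub, abs_mul, abs_mul, abs_two, abs_sub_comm]
  calc 2 * |Real.log (ε + ‖z₁‖) - Real.log (ε + ‖z₂‖)| * |(z₁ * conj z₂).im|
      ≤ 2 * (d / (ε + m)) * (d * m) := by gcongr
    _ = 2 * d ^ 2 * (m / (ε + m)) := by ring
    _ ≤ 2 * d ^ 2 * 1 := by gcongr; exact div_le_one_of_le₀ (by linarith) (by positivity)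
    _ = 2 * d ^ 2 := mul_one _
end

section
/- Let ε > 0 and τ ≥ 0. For all z₁, z₂ ∈ ℂ, |z₁·exp(−2iτ·ln(ε + |z₁|)) − z₂·exp(−2iτ·ln(ε + |z₂|))| ≤ (1 + 2τ)·|z₁ − z₂|. -/
/-!
Write both points as `z * exp (θ(‖z‖) * I)` with the real phase `θ(r) = -2τ log (ε + r)` and
assume `‖z₂‖ ≤ ‖z₁‖`. Splitting the difference as `(z₁ - z₂) e^{iθ₁} + z₂ (e^{iθ₁} - e^{iθ₂})`,
the first term costs `‖z₁ - z₂‖` and the second at most `‖z₂‖ |θ₁ - θ₂|`, because `t ↦ e^{it}`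
is 1-Lipschitz. The logarithm is `1/(ε + ‖z₂‖)`-Lipschitz to the right of `ε + ‖z₂‖`, so the
factor `‖z₂‖` is absorbed: `‖z₂‖ |θ₁ - θ₂| ≤ 2τ (‖z₁‖ - ‖z₂‖) ≤ 2τ ‖z₁ - z₂‖`.
-/

open Complex

lemma norm_exp_ofReal_mul_I_sub_exp_ofReal_mul_I_le (s t : ℝ) :
    ‖exp (s * I) - exp (t * I)‖ ≤ |s - t| := by
  have hfactor : exp (s * I) - exp (t * I) = exp (t * I) * (exp (I * (s - t : ℝ)) - 1) := by
    rw [mul_sub, ← exp_add]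
    push_cast
    ring_nf
  rw [hfactor, norm_mul, norm_exp_ofReal_mul_I, one_mul]
  exact Real.norm_exp_I_mul_ofReal_sub_one_le

lemma norm_mul_exp_sub_mul_exp_le (z w : ℂ) (s t : ℝ) :
    ‖z * exp (s * I) - w * exp (t * I)‖ ≤ ‖z - w‖ + ‖w‖ * |s - t| :=
  calc ‖z * exp (s * I) - w * exp (t * I)‖
      = ‖(z - w) * exp (s * I) + w * (exp (s * I) - exp (t * I))‖ := by ring_nf
    _ ≤ ‖(z - w) * exp (s * I)‖ + ‖w * (exp (s * I) - exp (t * I))‖ := norm_add_le _ _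
    _ ≤ ‖z - w‖ + ‖w‖ * |s - t| := by
      rw [norm_mul, norm_mul, norm_exp_ofReal_mul_I, mul_one]
      gcongr
      exact norm_exp_ofReal_mul_I_sub_exp_ofReal_mul_I_le s t

lemma mul_abs_log_add_sub_log_add_le {ε a b : ℝ} (hε : 0 < ε) (ha : 0 ≤ a) (hab : a ≤ b) :
    a * |Real.log (ε + b) - Real.log (ε + a)| ≤ b - a := by
  have hεa : 0 < ε + a := by positivity
  have hεb : 0 < ε + b := by linarith
  have hlog_mono : Real.log (ε + a) ≤ Real.log (ε + b) := Real.log_le_log hεa (by linarith)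
  calc a * |Real.log (ε + b) - Real.log (ε + a)|
      = a * Real.log ((ε + b) / (ε + a)) := by
        rw [abs_of_nonneg (sub_nonneg.2 hlog_mono), Real.log_div hεb.ne' hεa.ne']
    _ ≤ a * ((ε + b) / (ε + a) - 1) := by
        gcongr
        exact Real.log_le_sub_one_of_pos (div_pos hεb hεa)
    _ = a / (ε + a) * (b - a) := by
        field_simp
        ring
    _ ≤ 1 * (b - a) := by
        gcongr
        exact (div_le_one hεa).2 (by linarith)
    _ = b - a := one_mul _

theorem stmt_1 (ε τ : ℝ) (hε : 0 < ε) (hτ : 0 ≤ τ) (z₁ z₂ : ℂ) :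
    ‖(z₁ * Complex.exp (-2 * Complex.I * τ * (Real.log (ε + ‖z₁‖) : ℂ))
        - z₂ * Complex.exp (-2 * Complex.I * τ * (Real.log (ε + ‖z₂‖) : ℂ)))‖
      ≤ (1 + 2 * τ) * ‖(z₁ - z₂)‖ := by
  wlog hle : ‖z₂‖ ≤ ‖z₁‖ generalizing z₁ z₂
  · rw [norm_sub_rev, norm_sub_rev z₁]
    exact this z₂ z₁ (le_of_not_ge hle)
  have hphase (z : ℂ) : -2 * I * τ * (Real.log (ε + ‖z‖) : ℂ)
      = ((-2 * τ * Real.log (ε + ‖z‖) : ℝ) : ℂ) * I := by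
    push_cast
    ring
  rw [hphase, hphase]
  calc _ ≤ ‖z₁ - z₂‖ + ‖z₂‖ * |-2 * τ * Real.log (ε + ‖z₁‖) - -2 * τ * Real.log (ε + ‖z₂‖)| :=
        norm_mul_exp_sub_mul_exp_le _ _ _ _
    _ = ‖z₁ - z₂‖ + 2 * τ * (‖z₂‖ * |Real.log (ε + ‖z₁‖) - Real.log (ε + ‖z₂‖)|) := by
        rw [← mul_sub, abs_mul, abs_of_nonpos (by linarith)]
        ring
    _ ≤ ‖z₁ - z₂‖ + 2 * τ * (‖z₁‖ - ‖z₂‖) := by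
        gcongr
        exact mul_abs_log_add_sub_log_add_le hε (norm_nonneg _) hle
    _ ≤ (1 + 2 * τ) * ‖z₁ - z₂‖ := by
        nlinarith [norm_sub_norm_le z₁ z₂]
end

section
/- Let (α, μ) be a measure space, ε > 0, τ ≥ 0, and let f, g : α → ℂ be strongly measurable. Then the L²(μ)-norm of the function x ↦ f(x)·exp(−2iτ·ln(ε + |f(x)|)) − g(x)·exp(−2iτ·ln(ε + |g(x)|)) is at most (1 + 2τ) times the L²(μ)-norm of f − g. -/
/-!
Write `z ↦ z · e^{iφ(|z|)}` with `φ(r) = -2τ log(ε + r)`. For `|w| ≤ |z|`,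
`z e^{iφ(|z|)} - w e^{iφ(|w|)} = (z - w) e^{iφ(|z|)} + w (e^{iφ(|z|)} - e^{iφ(|w|)})`;
the first term has modulus `|z - w|`, and since `t ↦ e^{it}` is 1-Lipschitz the second is at most
`|w| · 2τ (log(ε + |z|) - log(ε + |w|)) ≤ 2τ (|z| - |w|)` by `log x ≤ x - 1`.
The pointwise bound `(1 + 2τ)|f - g|` then integrates to the `L²` estimate.
-/

open MeasureTheory Complex

theorem norm_exp_I_mul_ofReal_sub_exp_I_mul_ofReal_le (x y : ℝ) :
    ‖exp (I * x) - exp (I * y)‖ ≤ |x - y| := by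
  have hsplit : exp (I * x) - exp (I * y) = exp (I * y) * (exp (I * ↑(x - y)) - 1) := by
    rw [mul_sub, ← exp_add]; push_cast; ring_nf
  rw [hsplit, norm_mul, norm_exp_I_mul_ofReal, one_mul]
  exact Real.norm_exp_I_mul_ofReal_sub_one_le

theorem norm_mul_exp_phase_sub_le {φ : ℝ → ℝ} {L : ℝ} (hL : 0 ≤ L)
    (hφ : ∀ a b : ℝ, 0 ≤ b → b ≤ a → b * |φ a - φ b| ≤ L * (a - b)) (z w : ℂ) :
    ‖z * exp (I * φ ‖z‖) - w * exp (I * φ ‖w‖)‖ ≤ (1 + L) * ‖z - w‖ := by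
  wlog hwz : ‖w‖ ≤ ‖z‖ generalizing z w
  · rw [norm_sub_rev, norm_sub_rev z]
    exact this w z (le_of_not_ge hwz)
  have hrot : ‖w‖ * ‖exp (I * φ ‖z‖) - exp (I * φ ‖w‖)‖ ≤ L * ‖z - w‖ :=
    calc ‖w‖ * ‖exp (I * φ ‖z‖) - exp (I * φ ‖w‖)‖
        ≤ ‖w‖ * |φ ‖z‖ - φ ‖w‖| := by
          gcongr; exact norm_exp_I_mul_ofReal_sub_exp_I_mul_ofReal_le _ _
      _ ≤ L * (‖z‖ - ‖w‖) := hφ _ _ (norm_nonneg w) hwz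
      _ ≤ L * ‖z - w‖ := by gcongr; exact norm_sub_norm_le z w
  calc ‖z * exp (I * φ ‖z‖) - w * exp (I * φ ‖w‖)‖
      = ‖(z - w) * exp (I * φ ‖z‖) + w * (exp (I * φ ‖z‖) - exp (I * φ ‖w‖))‖ := by ring_nf
    _ ≤ ‖z - w‖ + ‖w‖ * ‖exp (I * φ ‖z‖) - exp (I * φ ‖w‖)‖ := by
        grw [norm_add_le, norm_mul, norm_mul, norm_exp_I_mul_ofReal, mul_one]
    _ ≤ (1 + L) * ‖z - w‖ := by linarith

theorem mul_log_add_sub_log_add_le {ε a b : ℝ} (hε : 0 < ε) (hb : 0 ≤ b) (hba : b ≤ a) :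
    b * (Real.log (ε + a) - Real.log (ε + b)) ≤ a - b := by
  have hεb : 0 < ε + b := by linarith
  have hlog : Real.log (ε + a) - Real.log (ε + b) ≤ (a - b) / (ε + b) := by
    rw [← Real.log_div (by linarith) hεb.ne']
    calc Real.log ((ε + a) / (ε + b)) ≤ (ε + a) / (ε + b) - 1 :=
          Real.log_le_sub_one_of_pos (div_pos (by linarith) hεb)
      _ = (a - b) / (ε + b) := by field_simp; ring
  calc b * (Real.log (ε + a) - Real.log (ε + b)) ≤ b * ((a - b) / (ε + b)) := by gcongr
    _ ≤ a - b := by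
        rw [mul_div_assoc', div_le_iff₀ hεb]
        nlinarith

theorem norm_mul_exp_log_phase_sub_le {ε τ : ℝ} (hε : 0 < ε) (hτ : 0 ≤ τ) (z w : ℂ) :
    ‖z * exp (-2 * I * τ * (Real.log (ε + ‖z‖) : ℂ))
      - w * exp (-2 * I * τ * (Real.log (ε + ‖w‖) : ℂ))‖ ≤ (1 + 2 * τ) * ‖z - w‖ := by
  have hφ : ∀ a b : ℝ, 0 ≤ b → b ≤ a → b * |-2 * τ * Real.log (ε + a) - -2 * τ * Real.log (ε + b)|
      ≤ 2 * τ * (a - b) := by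
    intro a b hb hba
    have hmono : Real.log (ε + b) ≤ Real.log (ε + a) := Real.log_le_log (by linarith) (by linarith)
    rw [abs_of_nonpos (by nlinarith)]
    nlinarith [mul_log_add_sub_log_add_le hε hb hba]
  convert norm_mul_exp_phase_sub_le (by linarith) hφ z w using 5 <;> push_cast <;> ring

theorem stmt_2_general {α : Type*} [MeasurableSpace α] (μ : Measure α)
    (ε τ : ℝ) (hε : 0 < ε) (hτ : 0 ≤ τ) (f g : α → ℂ) :
    eLpNorm (fun x =>
        f x * Complex.exp (-2 * Complex.I * τ * (Real.log (ε + ‖f x‖) : ℂ))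
        - g x * Complex.exp (-2 * Complex.I * τ * (Real.log (ε + ‖g x‖) : ℂ))) 2 μ
      ≤ ENNReal.ofReal (1 + 2 * τ) * eLpNorm (f - g) 2 μ :=
  eLpNorm_le_mul_eLpNorm_of_ae_le_mul
    (ae_of_all μ fun x => norm_mul_exp_log_phase_sub_le hε hτ (f x) (g x)) 2

theorem stmt_2 {α : Type*} [MeasurableSpace α] (μ : Measure α)
    (ε τ : ℝ) (hε : 0 < ε) (hτ : 0 ≤ τ) (f g : α → ℂ)
    (hf : StronglyMeasurable f) (hg : StronglyMeasurable g) :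
    eLpNorm (fun x =>
        f x * Complex.exp (-2 * Complex.I * τ * (Real.log (ε + ‖f x‖) : ℂ))
        - g x * Complex.exp (-2 * Complex.I * τ * (Real.log (ε + ‖g x‖) : ℂ))) 2 μ
      ≤ ENNReal.ofReal (1 + 2 * τ) * eLpNorm (f - g) 2 μ :=
  stmt_2_general μ ε τ hε hτ f g
end

section
/- Let ε > 0, t ≥ 0, d ∈ ℕ, and let ω₀ : ℝ^d → ℂ be differentiable at a point x with ω₀(x) ≠ 0. Then the function w(y) = ω₀(y)·exp(−2it·ln(ε + |ω₀(y)|)) is differentiable at x and the operator norm of its (real Fréchet) derivative satisfies ‖Dw(x)‖ ≤ (1 + 2t)·‖Dω₀(x)‖. -/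
/-!
Write `w = Φ ∘ ω₀` with `Φ z = z · exp(iθ(z))` and `θ(z) = -2t log(ε + |z|)`. Since the phase factor
has modulus one, `‖DΦ(z)‖ ≤ 1 + |z| ‖Dθ(z)‖`, and `‖Dθ(z)‖ ≤ 2t / (ε + |z|)` because the norm is
1-Lipschitz; hence `‖DΦ(z)‖ ≤ 1 + 2t` away from `z = 0`, and the chain rule gives the bound.
-/

open Complex

section PhaseModulation

variable {E : Type*} [NormedAddCommGroup E] [NormedSpace ℝ E] {f : E → ℂ} {θ : E → ℝ} {x : E}

theorem hasFDerivAt_mul_exp_ofReal_mul_I {f' : E →L[ℝ] ℂ} {θ' : E →L[ℝ] ℝ}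
    (hf : HasFDerivAt f f' x) (hθ : HasFDerivAt θ θ' x) :
    HasFDerivAt (fun y => f y * exp (θ y * I))
      (exp (θ x * I) • (f' + (f x * I) • ofRealCLM.comp θ')) x := by
  have hphase := ((ofRealCLM.hasFDerivAt.comp x hθ).mul_const I).cexp
  refine (hf.mul hphase).congr_fderiv ?_
  ext v
  simp only [smul_apply, add_apply, smul_eq_mul,
    ContinuousLinearMap.comp_apply, Function.comp_apply, ofRealCLM_apply]
  ring

theorem norm_fderiv_mul_exp_ofReal_mul_I_le (hf : DifferentiableAt ℝ f x)
    (hθ : DifferentiableAt ℝ θ x) :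
    ‖fderiv ℝ (fun y => f y * exp (θ y * I)) x‖ ≤ ‖fderiv ℝ f x‖ + ‖f x‖ * ‖fderiv ℝ θ x‖ := by
  rw [(hasFDerivAt_mul_exp_ofReal_mul_I hf.hasFDerivAt hθ.hasFDerivAt).fderiv, norm_smul,
    norm_exp_ofReal_mul_I, one_mul]
  calc _ ≤ ‖fderiv ℝ f x‖ + ‖(f x * I) • ofRealCLM.comp (fderiv ℝ θ x)‖ := norm_add_le _ _
    _ ≤ ‖fderiv ℝ f x‖ + ‖f x‖ * ‖fderiv ℝ θ x‖ := by
      grw [norm_smul, norm_mul, norm_I, mul_one, ContinuousLinearMap.opNorm_comp_le,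
        ofRealCLM_norm, one_mul]

end PhaseModulation

section LogAddNorm

variable {F : Type*} [NormedAddCommGroup F] {ε : ℝ} {z : F}

theorem differentiableAt_log_add_norm [InnerProductSpace ℝ F] (hε : 0 ≤ ε) (hz : z ≠ 0) :
    DifferentiableAt ℝ (fun w : F => Real.log (ε + ‖w‖)) z :=
  ((contDiffAt_norm ℝ hz).differentiableAt one_ne_zero |>.const_add ε).log (by positivity)

theorem norm_fderiv_log_add_norm_le [NormedSpace ℝ F] (hz : DifferentiableAt ℝ (‖·‖) z) (hεz : 0 < ε + ‖z‖) :
    ‖fderiv ℝ (fun w : F => Real.log (ε + ‖w‖)) z‖ ≤ (ε + ‖z‖)⁻¹ := by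
  rw [((hz.hasFDerivAt.const_add ε).log hεz.ne').fderiv, norm_smul,
    Real.norm_of_nonneg (inv_nonneg.2 hεz.le)]
  calc _ ≤ (ε + ‖z‖)⁻¹ * 1 := by
        gcongr
        simpa using norm_fderiv_le_of_lipschitz ℝ lipschitzWith_one_norm (x₀ := z)
    _ = _ := mul_one _

end LogAddNorm

/-- The time-`t` flow map `Φ_B^t` of `i ∂ₜω = ω ln((ε + |ω|)²)`. -/
noncomputable def logPhaseFlow (ε t : ℝ) (z : ℂ) : ℂ :=
  z * exp (-2 * I * t * (Real.log (ε + ‖z‖) : ℂ))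

theorem logPhaseFlow_eq_mul_exp_ofReal_mul_I (ε t : ℝ) :
    logPhaseFlow ε t = fun z => z * exp (↑(-2 * t * Real.log (ε + ‖z‖)) * I) := by
  ext z
  simp only [logPhaseFlow]
  push_cast
  ring_nf

namespace logPhaseFlow

variable {ε t : ℝ} {z : ℂ}

theorem differentiableAt (hε : 0 ≤ ε) (hz : z ≠ 0) :
    DifferentiableAt ℝ (logPhaseFlow ε t) z := by
  rw [logPhaseFlow_eq_mul_exp_ofReal_mul_I]
  exact (hasFDerivAt_mul_exp_ofReal_mul_I (hasFDerivAt_id z)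
    ((differentiableAt_log_add_norm hε hz).const_mul (-2 * t)).hasFDerivAt).differentiableAt

theorem norm_fderiv_le (hε : 0 ≤ ε) (ht : 0 ≤ t) (hz : z ≠ 0) :
    ‖fderiv ℝ (logPhaseFlow ε t) z‖ ≤ 1 + 2 * t := by
  have hεz : 0 < ε + ‖z‖ := by positivity
  have hnorm : DifferentiableAt ℝ (‖·‖) z := (contDiffAt_norm ℂ hz).differentiableAt one_ne_zero
  have hlog := differentiableAt_log_add_norm hε hz
  rw [logPhaseFlow_eq_mul_exp_ofReal_mul_I]
  calc _ ≤ ‖fderiv ℝ (fun w : ℂ => w) z‖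
        + ‖z‖ * ‖fderiv ℝ (fun w : ℂ => -2 * t * Real.log (ε + ‖w‖)) z‖ :=
        norm_fderiv_mul_exp_ofReal_mul_I_le differentiableAt_id (hlog.const_mul _)
    _ ≤ 1 + ‖z‖ * (2 * t * (ε + ‖z‖)⁻¹) := by
      rw [fderiv_fun_id, fderiv_const_mul hlog, norm_smul]
      grw [ContinuousLinearMap.norm_id_le, norm_fderiv_log_add_norm_le hnorm hεz, Real.norm_eq_abs]
      simp only [abs_mul, abs_neg, abs_two, abs_of_nonneg ht, le_refl]
    _ = 1 + 2 * t * (‖z‖ / (ε + ‖z‖)) := by ring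
    _ ≤ 1 + 2 * t * 1 := by grw [div_le_one_of_le₀ (by linarith) hεz.le]
    _ = 1 + 2 * t := by ring

end logPhaseFlow

theorem stmt_4 (ε t : ℝ) (hε : 0 < ε) (ht : 0 ≤ t) (d : ℕ)
    (ω₀ : EuclideanSpace ℝ (Fin d) → ℂ) (x : EuclideanSpace ℝ (Fin d))
    (hdiff : DifferentiableAt ℝ ω₀ x) (hne : ω₀ x ≠ 0) :
    DifferentiableAt ℝ
      (fun y => ω₀ y *
        Complex.exp (-2 * Complex.I * t * (Real.log (ε + ‖ω₀ y‖) : ℂ))) x ∧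
    ‖fderiv ℝ
      (fun y => ω₀ y *
        Complex.exp (-2 * Complex.I * t * (Real.log (ε + ‖ω₀ y‖) : ℂ))) x‖
      ≤ (1 + 2 * t) * ‖fderiv ℝ ω₀ x‖ := by
  have hΦ := logPhaseFlow.differentiableAt (t := t) hε.le hne
  refine ⟨hΦ.comp x hdiff, ?_⟩
  change ‖fderiv ℝ (logPhaseFlow ε t ∘ ω₀) x‖ ≤ _
  rw [fderiv_comp x hΦ hdiff]
  grw [ContinuousLinearMap.opNorm_comp_le, logPhaseFlow.norm_fderiv_le hε.le ht hne]
end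

section
/- Let d ∈ ℕ, let ω₀ : ℝ^d → ℂ be twice continuously differentiable on a neighborhood of a point x with ω₀(x) ≠ 0, and let e_j, e_k be the j-th and k-th standard basis vectors of ℝ^d. Then the modulus function y ↦ |ω₀(y)| is twice differentiable at x and its second partial derivative satisfies |∂_k ∂_j |ω₀|(x)| ≤ |∂_k ∂_j ω₀(x)| + (2/|ω₀(x)|)·|∂_j ω₀(x)|·|∂_k ω₀(x)|. -/
/-!
Away from the zeros of `f`, the derivative of `‖f‖` in direction `v` is `⟪f, ∂ᵥf⟫ / ‖f‖`.
Differentiating this quotient once more in direction `w` gives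
`(⟪∂_w f, ∂ᵥf⟫ + ⟪f, ∂_w ∂ᵥf⟫) / ‖f‖ - ⟪f, ∂ᵥf⟫ ⟪f, ∂_w f⟫ / ‖f‖³`,
and Cauchy–Schwarz bounds the first and last terms by `‖∂ᵥf‖ ‖∂_w f‖ / ‖f‖` each.
-/

open Topology Filter
open scoped RealInnerProductSpace

section

variable {E F : Type*} [NormedAddCommGroup E] [NormedSpace ℝ E]
  [NormedAddCommGroup F] [InnerProductSpace ℝ F] {f g : E → F} {f' g' : E →L[ℝ] F} {x : E}

theorem HasFDerivAt.norm (hf : HasFDerivAt f f' x) (h0 : f x ≠ 0) :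
    HasFDerivAt (fun y => ‖f y‖) (‖f x‖⁻¹ • (innerSL ℝ (f x)).comp f') x := by
  have hsqrt := (Real.hasDerivAt_sqrt (pow_ne_zero 2 (norm_ne_zero_iff.2 h0))).comp_hasFDerivAt x
    hf.norm_sq
  simp only [Function.comp_def, Real.sqrt_sq (norm_nonneg _)] at hsqrt
  refine hsqrt.congr_fderiv ?_
  ext v
  simp only [smul_apply, ContinuousLinearMap.comp_apply, coe_innerSL_apply, nsmul_eq_mul,
    Nat.cast_ofNat, smul_eq_mul]
  field_simp

theorem HasFDerivAt.inner_div_norm (hf : HasFDerivAt f f' x) (hg : HasFDerivAt g g' x)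
    (h0 : f x ≠ 0) :
    HasFDerivAt (fun y => ⟪f y, g y⟫ / ‖f y‖)
      (‖f x‖⁻¹ • ((innerSL ℝ (g x)).comp f' + (innerSL ℝ (f x)).comp g')
        - (⟪f x, g x⟫ / ‖f x‖ ^ 3) • (innerSL ℝ (f x)).comp f') x := by
  have hinv : HasFDerivAt (fun y => ‖f y‖⁻¹) _ x :=
    (hasFDerivAt_inv (norm_ne_zero_iff.2 h0)).comp x (hf.norm h0)
  simp only [div_eq_mul_inv]
  refine ((hf.inner ℝ hg).fun_mul hinv).congr_fderiv ?_
  ext w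
  simp only [ContinuousLinearMap.comp_smulₛₗ, map_inv₀, Real.ringHom_apply, add_apply, smul_apply,
    ContinuousLinearMap.comp_apply, coe_innerSL_apply, ContinuousLinearMap.toSpanSingleton_apply,
    smul_eq_mul, mul_neg, ContinuousLinearMap.prod_apply, fderivInnerCLM_apply, sub_apply]
  rw [real_inner_comm (g x) (f' w)]
  ring

theorem abs_fderiv_inner_div_norm_apply_le (hf : HasFDerivAt f f' x) (hg : HasFDerivAt g g' x)
    (h0 : f x ≠ 0) (w : E) :
    |fderiv ℝ (fun y => ⟪f y, g y⟫ / ‖f y‖) x w| ≤ ‖g' w‖ + 2 / ‖f x‖ * (‖g x‖ * ‖f' w‖) := by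
  have hr : 0 < ‖f x‖ := norm_pos_iff.2 h0
  rw [(hf.inner_div_norm hg h0).fderiv]
  simp only [sub_apply, smul_apply, add_apply, ContinuousLinearMap.comp_apply,
    innerSL_apply_apply, smul_eq_mul]
  calc _ ≤ ‖f x‖⁻¹ * (|⟪g x, f' w⟫| + |⟪f x, g' w⟫|)
          + |⟪f x, g x⟫| / ‖f x‖ ^ 3 * |⟪f x, f' w⟫| := by
        refine (abs_sub _ _).trans ?_
        rw [abs_mul, abs_mul, abs_div, abs_inv, abs_pow, abs_norm]
        gcongr
        exact abs_add_le _ _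
    _ ≤ ‖f x‖⁻¹ * (‖g x‖ * ‖f' w‖ + ‖f x‖ * ‖g' w‖)
          + ‖f x‖ * ‖g x‖ / ‖f x‖ ^ 3 * (‖f x‖ * ‖f' w‖) := by
        gcongr <;> exact abs_real_inner_le_norm _ _
    _ = ‖g' w‖ + 2 / ‖f x‖ * (‖g x‖ * ‖f' w‖) := by
        field_simp
        ring

theorem ContDiffAt.fderiv_norm_apply_eventuallyEq (hf : ContDiffAt ℝ 2 f x) (h0 : f x ≠ 0)
    (v : E) :
    (fun y => fderiv ℝ (fun z => ‖f z‖) y v) =ᶠ[𝓝 x] fun y => ⟪f y, fderiv ℝ f y v⟫ / ‖f y‖ := by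
  filter_upwards [hf.eventually (by simp), hf.continuousAt.eventually_ne h0] with y hfy hy0
  rw [((hfy.differentiableAt two_ne_zero).hasFDerivAt.norm hy0).fderiv]
  simp [div_eq_inv_mul]

theorem ContDiffAt.differentiableAt_fderiv_apply (hf : ContDiffAt ℝ 2 f x) (v : E) :
    DifferentiableAt ℝ (fun y => fderiv ℝ f y v) x :=
  ((hf.fderiv_right (m := 1) le_rfl).differentiableAt one_ne_zero).clm_apply
    (differentiableAt_const v)

end

theorem stmt_5 (d : ℕ) (ω₀ : EuclideanSpace ℝ (Fin d) → ℂ)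
    (x : EuclideanSpace ℝ (Fin d)) (j k : Fin d)
    (hreg : ContDiffAt ℝ 2 ω₀ x) (hne : ω₀ x ≠ 0) :
    DifferentiableAt ℝ (fun y => Norm.norm (ω₀ y)) x ∧
    DifferentiableAt ℝ
      (fun y => fderiv ℝ (fun z => Norm.norm (ω₀ z)) y (EuclideanSpace.single j 1)) x ∧
    |fderiv ℝ (fun y => fderiv ℝ (fun z => Norm.norm (ω₀ z)) y (EuclideanSpace.single j 1)) x
        (EuclideanSpace.single k 1)|
      ≤ Norm.norm (fderiv ℝ (fun y => fderiv ℝ ω₀ y (EuclideanSpace.single j 1)) x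
            (EuclideanSpace.single k 1))
        + (2 / Norm.norm (ω₀ x)) *
          (Norm.norm (fderiv ℝ ω₀ x (EuclideanSpace.single j 1)) *
            Norm.norm (fderiv ℝ ω₀ x (EuclideanSpace.single k 1))) := by
  have hω := (hreg.differentiableAt two_ne_zero).hasFDerivAt
  have hωj := (hreg.differentiableAt_fderiv_apply (EuclideanSpace.single j 1)).hasFDerivAt
  have hnorm_j := hreg.fderiv_norm_apply_eventuallyEq hne (EuclideanSpace.single j 1)
  refine ⟨(hω.norm hne).differentiableAt,
    (hω.inner_div_norm hωj hne).differentiableAt.congr_of_eventuallyEq hnorm_j, ?_⟩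
  rw [hnorm_j.fderiv_eq]
  exact abs_fderiv_inner_div_norm_apply_le hω hωj hne _
end

section
/- Let ε > 0, define φ^ε(z) = 2z·ln(ε + |z|) for z ∈ ℂ, let d ∈ ℕ, and let u : ℝ^d → ℂ be differentiable at a point x with u(x) ≠ 0. Then the composition y ↦ φ^ε(u(y)) is differentiable at x and the operator norm of its (real Fréchet) derivative satisfies ‖D(φ^ε ∘ u)(x)‖ ≤ 2·‖Du(x)‖·(1 + |ln(ε + |u(x)|)|). -/
/-!
Write `φ^ε(z) = 2 · g(z)` with `g(w) = ln(ε + ‖w‖) • w`. Away from `0`, the product rule gives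
`Dg(z) = ln(ε + ‖z‖) • id + (ε + ‖z‖)⁻¹ D‖·‖(z) ⊗ z`, and since the norm is `1`-Lipschitz and
`‖z‖ ≤ ε + ‖z‖`, `‖Dg(z)‖ ≤ |ln(ε + ‖z‖)| + 1`. The chain rule and submultiplicativity of the operator
norm then bound the derivative of `φ^ε ∘ u`.
-/

open ContinuousLinearMap

section LogAddNormSmul

variable {F : Type*} [NormedAddCommGroup F] [InnerProductSpace ℝ F] {ε : ℝ} {z : F}

theorem norm_fderiv_norm_le_one {E : Type*} [NormedAddCommGroup E] [NormedSpace ℝ E] (z : E) :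
    ‖fderiv ℝ (‖·‖ : E → ℝ) z‖ ≤ 1 := by
  simpa using norm_fderiv_le_of_lipschitz ℝ (lipschitzWith_one_norm (E := E)) (x₀ := z)

theorem hasFDerivAt_log_const_add_norm (hε : 0 ≤ ε) (hz : z ≠ 0) :
    HasFDerivAt (fun w : F => Real.log (ε + ‖w‖)) ((ε + ‖z‖)⁻¹ • fderiv ℝ (‖·‖) z) z := by
  have hnorm : HasFDerivAt (fun w : F => ε + ‖w‖) (fderiv ℝ (‖·‖) z) z :=
    ((differentiableAt_id.norm ℝ hz).hasFDerivAt).const_add ε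
  exact hnorm.log (by positivity)

noncomputable def fderivLogAddNormSmul (ε : ℝ) (z : F) : F →L[ℝ] F :=
  Real.log (ε + ‖z‖) • ContinuousLinearMap.id ℝ F + ((ε + ‖z‖)⁻¹ • fderiv ℝ (‖·‖) z).smulRight z

theorem hasFDerivAt_log_const_add_norm_smul (hε : 0 ≤ ε) (hz : z ≠ 0) :
    HasFDerivAt (fun w : F => Real.log (ε + ‖w‖) • w) (fderivLogAddNormSmul ε z) z :=
  (hasFDerivAt_log_const_add_norm hε hz).smul (hasFDerivAt_id z)

theorem norm_fderivLogAddNormSmul_le (hε : 0 ≤ ε) (z : F) :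
    ‖fderivLogAddNormSmul ε z‖ ≤ 1 + |Real.log (ε + ‖z‖)| := by
  have hratio : (ε + ‖z‖)⁻¹ * ‖z‖ ≤ 1 := by
    rcases (norm_nonneg z).eq_or_lt with hz | hz
    · simp [← hz]
    · rw [inv_mul_le_iff₀ (by positivity)]
      linarith
  calc ‖fderivLogAddNormSmul ε z‖
      ≤ |Real.log (ε + ‖z‖)| * ‖ContinuousLinearMap.id ℝ F‖
        + (ε + ‖z‖)⁻¹ * ‖fderiv ℝ (‖·‖) z‖ * ‖z‖ := by
        refine (norm_add_le _ _).trans (le_of_eq ?_)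
        rw [norm_smul, norm_smulRight_apply, norm_smul, Real.norm_eq_abs, Real.norm_eq_abs,
          abs_of_nonneg (by positivity : (0 : ℝ) ≤ (ε + ‖z‖)⁻¹)]
    _ ≤ |Real.log (ε + ‖z‖)| * 1 + (ε + ‖z‖)⁻¹ * 1 * ‖z‖ := by
        gcongr
        · exact norm_id_le
        · exact norm_fderiv_norm_le_one z
    _ ≤ 1 + |Real.log (ε + ‖z‖)| := by linarith

end LogAddNormSmul

theorem stmt_7 (ε : ℝ) (hε : 0 < ε) (d : ℕ)
    (u : EuclideanSpace ℝ (Fin d) → ℂ) (x : EuclideanSpace ℝ (Fin d))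
    (hdiff : DifferentiableAt ℝ u x) (hne : u x ≠ 0) :
    DifferentiableAt ℝ
      (fun y => 2 * u y * (Real.log (ε + ‖u y‖) : ℂ)) x ∧
    ‖fderiv ℝ (fun y => 2 * u y * (Real.log (ε + ‖u y‖) : ℂ)) x‖
      ≤ 2 * ‖fderiv ℝ u x‖ * (1 + |Real.log (ε + ‖u x‖)|) := by
  have hφ : (fun y => 2 * u y * (Real.log (ε + ‖u y‖) : ℂ))
      = (2 : ℝ) • (fun w : ℂ => Real.log (ε + ‖w‖) • w) ∘ u := by
    funext y
    simp only [Pi.smul_apply, Function.comp_apply, Complex.real_smul, Complex.ofReal_ofNat]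
    ring
  have hcomp : HasFDerivAt ((2 : ℝ) • (fun w : ℂ => Real.log (ε + ‖w‖) • w) ∘ u)
      ((2 : ℝ) • (fderivLogAddNormSmul ε (u x)).comp (fderiv ℝ u x)) x :=
    ((hasFDerivAt_log_const_add_norm_smul hε.le hne).comp x hdiff.hasFDerivAt).const_smul _
  rw [hφ, hcomp.fderiv]
  refine ⟨hcomp.differentiableAt, ?_⟩
  calc ‖(2 : ℝ) • (fderivLogAddNormSmul ε (u x)).comp (fderiv ℝ u x)‖
      ≤ 2 * (‖fderivLogAddNormSmul ε (u x)‖ * ‖fderiv ℝ u x‖) := by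
        rw [norm_smul, Real.norm_two]
        gcongr
        exact opNorm_comp_le _ _
    _ ≤ 2 * ((1 + |Real.log (ε + ‖u x‖)|) * ‖fderiv ℝ u x‖) := by
        gcongr
        exact norm_fderivLogAddNormSmul_le hε.le (u x)
    _ = 2 * ‖fderiv ℝ u x‖ * (1 + |Real.log (ε + ‖u x‖)|) := by ring
end

section
/- Let λ ∈ ℝ, v ∈ ℝ, b₀ ∈ ℂ with b₀ ≠ 0, and a₀ ∈ ℂ with α₀ := Re a₀ > 0. Let r : ℝ → ℝ be twice differentiable with r(t) > 0 for all t, r(0) = 1, r'(0) = −2·Im a₀, and r''(t) = 4α₀²/r(t)³ + 4λα₀/r(t) for all t; let φ : ℝ → ℝ be differentiable with φ(0) = 0 and φ'(t) = α₀/r(t)² + λ·ln(|b₀|²) − λ·ln(r(t)) for all t. Define u : ℝ × ℝ → ℂ by u(x,t) = (b₀/√(r(t)))·exp( i(vx − v²t) − iφ(t) − α₀·(x−2vt)²/(2r(t)²) + i·(r'(t)/r(t))·(x−2vt)²/4 ). Then u(x,0) = b₀·exp(−a₀x²/2 + ivx) for all x, and for all (x,t) ∈ ℝ × ℝ, i·∂_t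 u(x,t) + ∂_xx u(x,t) = λ·u(x,t)·ln(|u(x,t)|²). -/
/-!
The solution is a Galilean-boosted Gaussian `c * exp (p t + i v x - a t * (x - 2 v t) ^ 2 / 2)`.
For such a function `i ∂ₜu + ∂ₓₓu = u * (i p' - v² - a + (a² - i a' / 2) (x - 2 v t)²)`,
and `log |u|² = log |c|² + 2 Re p - Re a * (x - 2 v t)²` is quadratic in `x - 2 v t` too.
Matching coefficients, the equation becomes the Riccati equation `a' = -2 i (a² + λ Re a)` for
the width `a = α / r² - i r' / (2 r)`, which is the ODE for `r`, and a linear condition on the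
phase `p = -i (v² t + φ) - (log r) / 2`, which is the ODE for `φ`.
-/

open Complex

noncomputable def movingGaussian (c : ℂ) (v : ℝ) (p a : ℝ → ℂ) (x t : ℝ) : ℂ :=
  c * exp (p t + I * v * x - a t * (x - 2 * v * t) ^ 2 / 2)

namespace movingGaussian

variable {c : ℂ} {v : ℝ} {p a : ℝ → ℂ} {x t : ℝ}

theorem hasDerivAt_time {p' a' : ℂ} (hp : HasDerivAt p p' t) (ha : HasDerivAt a a' t) :
    HasDerivAt (fun s => movingGaussian c v p a x s)
      (movingGaussian c v p a x t *
        (p' - a' * (x - 2 * v * t) ^ 2 / 2 + 2 * v * a t * (x - 2 * v * t))) t := by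
  have hy : HasDerivAt (fun s : ℝ => ((x : ℂ) - 2 * v * s) ^ 2)
      (2 * ((x : ℂ) - 2 * v * t) * -(2 * v)) t :=
    (((hasDerivAt_id t).ofReal_comp.const_mul (2 * (v : ℂ))).const_sub (x : ℂ)).fun_pow 2
      |>.congr_deriv (by simp)
  have hθ : HasDerivAt (fun s => p s + I * v * x - a s * (x - 2 * v * s) ^ 2 / 2)
      (p' - a' * (x - 2 * v * t) ^ 2 / 2 + 2 * v * a t * (x - 2 * v * t)) t :=
    ((hp.add_const _).sub ((ha.mul hy).div_const 2)).congr_deriv (by ring)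
  exact (hθ.cexp.const_mul c).congr_deriv (mul_assoc _ _ _).symm

theorem hasDerivAt_space (y : ℝ) :
    HasDerivAt (fun z => movingGaussian c v p a z t)
      (movingGaussian c v p a y t * (I * v - a t * (y - 2 * v * t))) y := by
  have hz : HasDerivAt (fun z : ℝ => (z : ℂ)) 1 y := (hasDerivAt_id y).ofReal_comp
  have hy : HasDerivAt (fun z : ℝ => ((z : ℂ) - 2 * v * t) ^ 2)
      (2 * ((y : ℂ) - 2 * v * t) * 1) y :=
    (hz.sub_const (2 * v * t : ℂ)).fun_pow 2 |>.congr_deriv (by simp)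
  have hθ : HasDerivAt (fun z : ℝ => p t + I * v * z - a t * (z - 2 * v * t) ^ 2 / 2)
      (I * v - a t * (y - 2 * v * t)) y :=
    (((hz.const_mul (I * v)).const_add (p t)).sub ((hy.const_mul (a t)).div_const 2)).congr_deriv
      (by ring)
  exact (hθ.cexp.const_mul c).congr_deriv (mul_assoc _ _ _).symm

theorem deriv_deriv_space :
    deriv (fun y => deriv (fun z => movingGaussian c v p a z t) y) x
      = movingGaussian c v p a x t * ((I * v - a t * (x - 2 * v * t)) ^ 2 - a t) := by
  have hfirst : (fun y => deriv (fun z => movingGaussian c v p a z t) y)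
      = fun y => movingGaussian c v p a y t * (I * v - a t * (y - 2 * v * t)) :=
    funext fun y => hasDerivAt_space y |>.deriv
  have hw : HasDerivAt (fun y : ℝ => I * v - a t * ((y : ℂ) - 2 * v * t)) (-a t) x := by
    simpa using ((hasDerivAt_id x).ofReal_comp.sub_const (2 * v * t : ℂ)).const_mul (a t)
      |>.const_sub (I * v)
  rw [hfirst, ((hasDerivAt_space x).fun_mul hw).deriv]
  ring

theorem schrodinger_eq {p' a' : ℂ} (hp : HasDerivAt p p' t) (ha : HasDerivAt a a' t) :
    I * deriv (fun s => movingGaussian c v p a x s) t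
        + deriv (fun y => deriv (fun z => movingGaussian c v p a z t) y) x
      = movingGaussian c v p a x t *
        (I * p' - v ^ 2 - a t + (a t ^ 2 - I * a' / 2) * (x - 2 * v * t) ^ 2) := by
  rw [(hasDerivAt_time hp ha).deriv, deriv_deriv_space]
  linear_combination movingGaussian c v p a x t * v ^ 2 * I_sq

theorem log_norm_sq (hc : c ≠ 0) :
    Real.log (‖movingGaussian c v p a x t‖ ^ 2)
      = Real.log (‖c‖ ^ 2) + 2 * (p t).re - (a t).re * (x - 2 * v * t) ^ 2 := by
  have hy : ((x : ℂ) - 2 * v * t) ^ 2 = ((x - 2 * v * t) ^ 2 : ℝ) := by push_cast; ring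
  have hre : (p t + I * v * x - a t * (x - 2 * v * t) ^ 2 / 2).re
      = (p t).re - (a t).re * (x - 2 * v * t) ^ 2 / 2 := by
    rw [hy]
    simp only [add_re, sub_re, div_ofNat_re, mul_re, I_re, I_im, ofReal_re, ofReal_im]
    ring
  rw [movingGaussian, norm_mul, norm_exp, hre, mul_pow, ← Real.exp_nat_mul,
    Real.log_mul (by positivity) (Real.exp_pos _).ne', Real.log_exp]
  push_cast
  ring

end movingGaussian

noncomputable def gaussianWidth (α : ℝ) (r r' : ℝ → ℝ) (t : ℝ) : ℂ :=
  α / r t ^ 2 - I * r' t / (2 * r t)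

theorem gaussianWidth_re (α : ℝ) (r r' : ℝ → ℝ) (t : ℝ) :
    (gaussianWidth α r r' t).re = α / r t ^ 2 := by
  simp [gaussianWidth, ← ofReal_pow, ← ofReal_ofNat, ← ofReal_mul]

theorem hasDerivAt_gaussianWidth {α lam : ℝ} {r r' : ℝ → ℝ} {t : ℝ} (hrt : r t ≠ 0)
    (hr : HasDerivAt r (r' t) t)
    (hr' : HasDerivAt r' (4 * α ^ 2 / r t ^ 3 + 4 * lam * α / r t) t) :
    HasDerivAt (gaussianWidth α r r')
      (-2 * I * (gaussianWidth α r r' t ^ 2 + lam * α / r t ^ 2)) t := by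
  have hrC : (r t : ℂ) ≠ 0 := ofReal_ne_zero.mpr hrt
  have h := ((hasDerivAt_const t (α : ℂ)).div (hr.ofReal_comp.fun_pow 2) (pow_ne_zero 2 hrC)).sub
    ((hr'.ofReal_comp.const_mul I).div (hr.ofReal_comp.const_mul 2) (mul_ne_zero two_ne_zero hrC))
  refine h.congr_deriv ?_
  simp only [gaussianWidth]
  push_cast
  field_simp
  linear_combination (r t * r' t ^ 2 * I - 4 * α * r' t) * r t * I_sq

noncomputable def gaussianPhase (v : ℝ) (φ r : ℝ → ℝ) (t : ℝ) : ℂ :=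
  -I * (v ^ 2 * t + φ t) - Real.log (r t) / 2

theorem gaussianPhase_re (v : ℝ) (φ r : ℝ → ℝ) (t : ℝ) :
    (gaussianPhase v φ r t).re = -Real.log (r t) / 2 := by
  simp [gaussianPhase, ← ofReal_pow, neg_div]

theorem hasDerivAt_gaussianPhase {v : ℝ} {φ r : ℝ → ℝ} {t φ' ρ' : ℝ} (hrt : r t ≠ 0)
    (hφ : HasDerivAt φ φ' t) (hr : HasDerivAt r ρ' t) :
    HasDerivAt (gaussianPhase v φ r) (-I * (v ^ 2 + φ') - ρ' / (2 * r t)) t :=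
  ((((hasDerivAt_id t).ofReal_comp.const_mul ((v : ℂ) ^ 2)).add hφ.ofReal_comp).const_mul
    (-I)).sub ((hr.log hrt).ofReal_comp.div_const 2) |>.congr_deriv (by push_cast; ring)

theorem ofReal_sqrt_inv {ρ : ℝ} (hρ : 0 < ρ) :
    ((√ρ : ℝ) : ℂ)⁻¹ = exp (-(Real.log ρ : ℂ) / 2) := by
  rw [Real.sqrt_eq_rpow, Real.rpow_def_of_pos hρ, ofReal_exp, ← exp_neg]
  push_cast
  ring_nf

theorem div_sqrt_mul_exp_eq_movingGaussian (b₀ : ℂ) (α v x t : ℝ) (r r' φ : ℝ → ℝ)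
    (hrt : 0 < r t) :
    (b₀ / (√(r t) : ℂ)) * exp (I * ((v * x - v ^ 2 * t : ℝ) : ℂ) - I * ((φ t : ℝ) : ℂ)
        - (α : ℂ) * ((x - 2 * v * t : ℝ) : ℂ) ^ 2 / (2 * ((r t : ℝ) : ℂ) ^ 2)
        + I * ((r' t / r t : ℝ) : ℂ) * ((x - 2 * v * t : ℝ) : ℂ) ^ 2 / 4)
      = movingGaussian b₀ v (gaussianPhase v φ r) (gaussianWidth α r r') x t := by
  have hrC : ((r t : ℝ) : ℂ) ≠ 0 := ofReal_ne_zero.mpr hrt.ne'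
  rw [div_eq_mul_inv, ofReal_sqrt_inv hrt, mul_assoc, ← exp_add, movingGaussian]
  congr 2
  simp only [gaussianPhase, gaussianWidth]
  push_cast
  field_simp
  ring

theorem stmt_10_general (lam v : ℝ) (b₀ a₀ : ℂ) (hb : b₀ ≠ 0)
    (r r' φ : ℝ → ℝ)
    (hrpos : ∀ t : ℝ, 0 < r t)
    (hr0 : r 0 = 1) (hr'0 : r' 0 = -2 * a₀.im)
    (hr : ∀ t : ℝ, HasDerivAt r (r' t) t)
    (hr'' : ∀ t : ℝ, HasDerivAt r'
      (4 * a₀.re ^ 2 / (r t) ^ 3 + 4 * lam * a₀.re / r t) t)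
    (hφ0 : φ 0 = 0)
    (hφ : ∀ t : ℝ, HasDerivAt φ
      (a₀.re / (r t) ^ 2 + lam * Real.log (‖b₀‖ ^ 2) - lam * Real.log (r t)) t)
    (u : ℝ → ℝ → ℂ)
    (hu : ∀ x t : ℝ, u x t = (b₀ / (Real.sqrt (r t) : ℂ)) *
      Complex.exp (Complex.I * ((v * x - v ^ 2 * t : ℝ) : ℂ)
        - Complex.I * ((φ t : ℝ) : ℂ)
        - (a₀.re : ℂ) * ((x - 2 * v * t : ℝ) : ℂ) ^ 2 / (2 * ((r t : ℝ) : ℂ) ^ 2)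
        + Complex.I * ((r' t / r t : ℝ) : ℂ) * ((x - 2 * v * t : ℝ) : ℂ) ^ 2 / 4)) :
    (∀ x : ℝ, u x 0 = b₀ * Complex.exp (-a₀ * (x : ℂ) ^ 2 / 2 + Complex.I * v * x)) ∧
    (∀ x t : ℝ,
      Complex.I * deriv (fun s => u x s) t
        + deriv (fun y => deriv (fun z => u z t) y) x
      = (lam : ℂ) * u x t * (Real.log (‖u x t‖ ^ 2) : ℂ)) := by
  set p := gaussianPhase v φ r
  set a := gaussianWidth a₀.re r r'
  obtain rfl : u = movingGaussian b₀ v p a :=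
    funext₂ fun x t =>
      (hu x t).trans (div_sqrt_mul_exp_eq_movingGaussian _ _ _ _ _ _ _ _ (hrpos t))
  refine ⟨fun x => ?_, fun x t => ?_⟩
  · have hp0 : p 0 = 0 := by simp [p, gaussianPhase, hr0, hφ0]
    have ha0 : a 0 = a₀ := by
      simp only [a, gaussianWidth, hr0, hr'0]
      push_cast
      linear_combination re_add_im a₀
    rw [movingGaussian, hp0, ha0]
    congr 2
    push_cast
    ring
  · have ha : a t = a₀.re / r t ^ 2 - I * r' t / (2 * r t) := rfl
    rw [movingGaussian.schrodinger_eq (hasDerivAt_gaussianPhase (hrpos t).ne' (hφ t) (hr t))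
        (hasDerivAt_gaussianWidth (hrpos t).ne' (hr t) (hr'' t)),
      movingGaussian.log_norm_sq hb, gaussianWidth_re, gaussianPhase_re]
    push_cast
    linear_combination movingGaussian b₀ v p a x t * I_sq *
      (-(v ^ 2 + (a₀.re / r t ^ 2 + lam * Real.log (‖b₀‖ ^ 2) - lam * Real.log (r t)))
        + (a t ^ 2 + lam * a₀.re / r t ^ 2) * (x - 2 * v * t) ^ 2)
      - movingGaussian b₀ v p a x t * ha

theorem stmt_10 (lam v : ℝ) (b₀ a₀ : ℂ) (hb : b₀ ≠ 0) (hα : 0 < a₀.re)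
    (r r' φ : ℝ → ℝ)
    (hrpos : ∀ t : ℝ, 0 < r t)
    (hr0 : r 0 = 1) (hr'0 : r' 0 = -2 * a₀.im)
    (hr : ∀ t : ℝ, HasDerivAt r (r' t) t)
    (hr'' : ∀ t : ℝ, HasDerivAt r'
      (4 * a₀.re ^ 2 / (r t) ^ 3 + 4 * lam * a₀.re / r t) t)
    (hφ0 : φ 0 = 0)
    (hφ : ∀ t : ℝ, HasDerivAt φ
      (a₀.re / (r t) ^ 2 + lam * Real.log (‖b₀‖ ^ 2) - lam * Real.log (r t)) t)
    (u : ℝ → ℝ → ℂ)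
    (hu : ∀ x t : ℝ, u x t = (b₀ / (Real.sqrt (r t) : ℂ)) *
      Complex.exp (Complex.I * ((v * x - v ^ 2 * t : ℝ) : ℂ)
        - Complex.I * ((φ t : ℝ) : ℂ)
        - (a₀.re : ℂ) * ((x - 2 * v * t : ℝ) : ℂ) ^ 2 / (2 * ((r t : ℝ) : ℂ) ^ 2)
        + Complex.I * ((r' t / r t : ℝ) : ℂ) * ((x - 2 * v * t : ℝ) : ℂ) ^ 2 / 4)) :
    (∀ x : ℝ, u x 0 = b₀ * Complex.exp (-a₀ * (x : ℂ) ^ 2 / 2 + Complex.I * v * x)) ∧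
    (∀ x t : ℝ,
      Complex.I * deriv (fun s => u x s) t
        + deriv (fun y => deriv (fun z => u z t) y) x
      = (lam : ℂ) * u x t * (Real.log (‖u x t‖ ^ 2) : ℂ)) :=
  stmt_10_general lam v b₀ a₀ hb r r' φ hrpos hr0 hr'0 hr hr'' hφ0 hφ u hu
end

section
/- Let λ < 0, b₀ > 0 a real number, and v ∈ ℝ. Define u : ℝ × ℝ → ℂ by u(x,t) = b₀·exp( i(vx − v²t) + (λ/2)(x − 2vt)² − i(−λ + λ·ln(b₀²))·t ). Then for all (x,t) ∈ ℝ × ℝ, i·∂_t u(x,t) + ∂_xx u(x,t) = λ·u(x,t)·ln(|u(x,t)|²); that is, the moving Gausson of velocity v is an exact solution of the one-dimensional logarithmic Schrödinger equation. -/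
/-!
Write `u = b₀ e^φ` with `φ` a quadratic polynomial in `(x, t)`. Then `∂ₜu = u ∂ₜφ` and
`∂ₓₓu = u ((∂ₓφ)² + ∂ₓₓφ)`, while `ln |u|² = ln b₀² + 2 Re φ = ln b₀² + λ (x - 2vt)²`. After dividing
by `u`, the equation becomes the polynomial identity `i ∂ₜφ + (∂ₓφ)² + ∂ₓₓφ = λ (ln b₀² + λ (x - 2vt)²)`,
whose constant term fixes the frequency `ω = -λ + λ ln b₀²` of the Gausson.
-/

open Complex

noncomputable def gaussonPhase (lam v ω x t : ℂ) : ℂ :=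
  I * (v * x - v ^ 2 * t) + lam / 2 * (x - 2 * v * t) ^ 2 - I * ω * t

section GaussonPhase

variable (lam v ω : ℂ)

lemma hasDerivAt_gaussonPhase_time (x t : ℂ) :
    HasDerivAt (fun t => gaussonPhase lam v ω x t)
      (-(I * v ^ 2) - 2 * lam * v * (x - 2 * v * t) - I * ω) t := by
  have hlin : HasDerivAt (fun t : ℂ => x - 2 * v * t) (-(2 * v)) t := by
    simpa using ((hasDerivAt_id t).const_mul (2 * v)).const_sub x
  have h := ((((hasDerivAt_id t).const_mul (v ^ 2)).const_sub (v * x)).const_mul I).fun_add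
    ((hlin.pow 2).const_mul (lam / 2)) |>.fun_sub ((hasDerivAt_id t).const_mul (I * ω))
  exact h.congr_deriv (by ring)

lemma hasDerivAt_gaussonPhase_space (x t : ℂ) :
    HasDerivAt (fun x => gaussonPhase lam v ω x t) (I * v + lam * (x - 2 * v * t)) x := by
  have h := ((((hasDerivAt_id x).const_mul v).sub_const (v ^ 2 * t)).const_mul I).fun_add
    ((((hasDerivAt_id x).sub_const (2 * v * t)).pow 2).const_mul (lam / 2))
    |>.sub_const (I * ω * t)
  exact h.congr_deriv (by simp only [id]; ring)

lemma hasDerivAt_gaussonPhase_space_deriv (x t : ℂ) :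
    HasDerivAt (fun x => I * v + lam * (x - 2 * v * t)) lam x := by
  simpa using (((hasDerivAt_id x).sub_const (2 * v * t)).const_mul lam).const_add (I * v)

lemma gaussonPhase_re (lam v ω x t : ℝ) :
    (gaussonPhase lam v ω x t).re = lam / 2 * (x - 2 * v * t) ^ 2 := by
  have h : gaussonPhase lam v ω x t
      = ((lam / 2 * (x - 2 * v * t) ^ 2 : ℝ) : ℂ) + ((v * x - v ^ 2 * t - ω * t : ℝ) : ℂ) * I := by
    simp only [gaussonPhase]; push_cast; ring
  rw [h, add_re, ofReal_re, mul_I_re, ofReal_im, neg_zero, add_zero]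

lemma gaussonPhase_equation (L x t : ℂ) :
    I * (-(I * v ^ 2) - 2 * lam * v * (x - 2 * v * t) - I * (-lam + lam * L))
      + ((I * v + lam * (x - 2 * v * t)) ^ 2 + lam)
      = lam * (L + lam * (x - 2 * v * t) ^ 2) := by
  linear_combination (lam - lam * L) * I_sq

end GaussonPhase

section ConstMulCexp

variable {φ φ' : ℂ → ℂ} (B : ℂ)

lemma deriv_ofReal_const_mul_cexp {d : ℂ} {x : ℝ} (hφ : HasDerivAt φ d x) :
    deriv (fun s : ℝ => B * cexp (φ s)) x = B * cexp (φ x) * d :=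
  (hφ.cexp.const_mul B).comp_ofReal.deriv.trans (mul_assoc _ _ _).symm

lemma deriv_deriv_ofReal_const_mul_cexp {d : ℂ} {x : ℝ}
    (hφ : ∀ y : ℝ, HasDerivAt φ (φ' y) y) (hφ' : HasDerivAt φ' d x) :
    deriv (fun y : ℝ => deriv (fun z : ℝ => B * cexp (φ z)) y) x
      = B * cexp (φ x) * (φ' x ^ 2 + d) := by
  simp_rw [deriv_ofReal_const_mul_cexp B (hφ _)]
  have h := ((hφ x).cexp.const_mul B).mul hφ'
  exact h.comp_ofReal.deriv.trans (by ring)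

end ConstMulCexp

lemma log_norm_sq_ofReal_mul_cexp {b : ℝ} (hb : b ≠ 0) (z : ℂ) :
    Real.log (‖(b : ℂ) * cexp z‖ ^ 2) = Real.log (b ^ 2) + 2 * z.re := by
  rw [norm_mul, norm_exp, norm_real, Real.norm_eq_abs, mul_pow, sq_abs,
    Real.log_mul (pow_ne_zero 2 hb) (by positivity), ← Real.exp_nat_mul, Real.log_exp]
  push_cast
  ring

theorem stmt_11_general (lam : ℝ) (b₀ : ℝ) (hb : 0 < b₀) (v : ℝ)
    (u : ℝ → ℝ → ℂ)
    (hu : ∀ x t : ℝ, u x t = (b₀ : ℂ) *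
      Complex.exp (Complex.I * ((v * x - v ^ 2 * t : ℝ) : ℂ)
        + ((lam / 2 * (x - 2 * v * t) ^ 2 : ℝ) : ℂ)
        - Complex.I * ((-lam + lam * Real.log (b₀ ^ 2) : ℝ) : ℂ) * (t : ℂ))) :
    ∀ x t : ℝ,
      Complex.I * deriv (fun s => u x s) t
        + deriv (fun y => deriv (fun z => u z t) y) x
      = (lam : ℂ) * u x t * (Real.log (‖u x t‖ ^ 2) : ℂ) := by
  intro x t
  obtain rfl : u = fun x t : ℝ =>
      (b₀ : ℂ) * cexp (gaussonPhase lam v ((-lam + lam * Real.log (b₀ ^ 2) : ℝ)) x t) := by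
    funext x t
    rw [hu, gaussonPhase]
    push_cast
    ring
  rw [deriv_ofReal_const_mul_cexp _ (hasDerivAt_gaussonPhase_time _ _ _ _ _),
    deriv_deriv_ofReal_const_mul_cexp _ (fun y => hasDerivAt_gaussonPhase_space _ _ _ _ _)
      (hasDerivAt_gaussonPhase_space_deriv _ _ _ _),
    log_norm_sq_ofReal_mul_cexp hb.ne', gaussonPhase_re]
  beta_reduce
  set E := cexp (gaussonPhase lam v ((-lam + lam * Real.log (b₀ ^ 2) : ℝ)) x t)
  push_cast
  linear_combination b₀ * E * gaussonPhase_equation lam v (Real.log (b₀ ^ 2)) x t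

theorem stmt_11 (lam : ℝ) (hlam : lam < 0) (b₀ : ℝ) (hb : 0 < b₀) (v : ℝ)
    (u : ℝ → ℝ → ℂ)
    (hu : ∀ x t : ℝ, u x t = (b₀ : ℂ) *
      Complex.exp (Complex.I * ((v * x - v ^ 2 * t : ℝ) : ℂ)
        + ((lam / 2 * (x - 2 * v * t) ^ 2 : ℝ) : ℂ)
        - Complex.I * ((-lam + lam * Real.log (b₀ ^ 2) : ℝ) : ℂ) * (t : ℂ))) :
    ∀ x t : ℝ,
      Complex.I * deriv (fun s => u x s) t
        + deriv (fun y => deriv (fun z => u z t) y) x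
      = (lam : ℂ) * u x t * (Real.log (‖u x t‖ ^ 2) : ℂ) :=
  stmt_11_general lam b₀ hb v u hu
end

section
/- Let M ≥ 1 be an integer, h > 0, τ > 0, ε > 0, λ ∈ ℝ, and set f_ε(s) = 2λ·ln(ε + √s) and G_ε(z₁,z₂) = (∫₀¹ f_ε(θ|z₁|² + (1−θ)|z₂|²) dθ)·(z₁ + z₂)/2 for z₁, z₂ ∈ ℂ. Suppose u, w : ZMod M → ℂ satisfy the Crank-Nicolson finite difference relation i·(w(j) − u(j))/τ = −(1/(2h²))·((u(j+1) − 2u(j) + u(j−1)) + (w(j+1) − 2w(j) + w(j−1))) + G_ε(w(j), u(j)) for every j ∈ ZMod M. Then the discrete mass is conserved: ∑_{j ∈ ZMod M} |w(j)|² = ∑_{j ∈ ZMod M} |u(j)|². -/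
/-! Multiply the scheme at node `j` by `conj (w j + u j)`, sum over the grid and take imaginary
parts. The time difference contributes `(∑ ‖w j‖² - ∑ ‖u j‖²) / τ`. The discrete Laplacian term
is real because summation by parts on the cyclic grid makes the periodic Laplacian symmetric, and
the nonlinear term is real because `G z₁ z₂` is a real multiple of `z₁ + z₂`. -/

open Complex Finset ComplexConjugate

lemma im_I_mul_sub_mul_conj_add (a b : ℂ) :
    (I * (a - b) * conj (a + b)).im = ‖a‖ ^ 2 - ‖b‖ ^ 2 := by
  simp only [Complex.sq_norm, normSq_apply, mul_im, mul_re, I_re, I_im, sub_re, sub_im, add_re,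
    add_im, conj_re, conj_im]
  ring

lemma im_ofReal_mul_mul_conj (r : ℝ) (z : ℂ) : ((r : ℂ) * z * conj z).im = 0 := by
  rw [mul_assoc, mul_conj, ← ofReal_mul, ofReal_im]

lemma conj_sum_shift_mul_conj {ι : Type*} [AddCommGroup ι] [Fintype ι] (v : ι → ℂ) (a : ι) :
    conj (∑ j, v (j + a) * conj (v j)) = ∑ j, v (j - a) * conj (v j) := by
  rw [map_sum, ← Equiv.sum_comp (Equiv.addRight a) fun j => v (j - a) * conj (v j)]
  simp [mul_comm]

lemma im_sum_laplacian_mul_conj {ι : Type*} [AddCommGroup ι] [Fintype ι] (v : ι → ℂ) (a : ι) :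
    (∑ j, (v (j + a) - 2 * v j + v (j - a)) * conj (v j)).im = 0 := by
  have hsplit : ∑ j, (v (j + a) - 2 * v j + v (j - a)) * conj (v j)
      = (∑ j, v (j + a) * conj (v j)) + conj (∑ j, v (j + a) * conj (v j))
        - ((2 : ℝ) : ℂ) * ∑ j, v j * conj (v j) := by
    rw [conj_sum_shift_mul_conj, mul_sum, ← sum_add_distrib, ← sum_sub_distrib]
    exact sum_congr rfl fun j _ => by push_cast; ring
  rw [hsplit, add_conj, sub_im, ofReal_im, im_ofReal_mul, im_sum]
  simp [mul_conj]

theorem stmt_15_general (M : ℕ) [NeZero M] (h τ ε lam : ℝ)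
    (hτ : 0 < τ)
    (G : ℂ → ℂ → ℂ)
    (hG : ∀ z₁ z₂ : ℂ, G z₁ z₂ =
      ((∫ θ in (0:ℝ)..1,
          2 * lam * Real.log (ε + Real.sqrt (θ * ‖z₁‖ ^ 2
            + (1 - θ) * ‖z₂‖ ^ 2))) : ℝ) * (z₁ + z₂) / 2)
    (u w : ZMod M → ℂ)
    (hCN : ∀ j : ZMod M,
      Complex.I * (w j - u j) / (τ : ℂ)
        = -(1 / (2 * (h : ℂ) ^ 2)) *
            ((u (j + 1) - 2 * u j + u (j - 1)) + (w (j + 1) - 2 * w j + w (j - 1)))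
          + G (w j) (u j)) :
    ∑ j : ZMod M, ‖w j‖ ^ 2 = ∑ j : ZMod M, ‖u j‖ ^ 2 := by
  set v := w + u
  have hsum := congrArg (fun F => (∑ j, F j * conj (v j)).im) (funext hCN)
  have hlhs : (∑ j, I * (w j - u j) / τ * conj (v j)).im
      = (∑ j, ‖w j‖ ^ 2 - ∑ j, ‖u j‖ ^ 2) / τ := by
    simp only [im_sum, div_mul_eq_mul_div, div_ofReal_im, v, Pi.add_apply,
      im_I_mul_sub_mul_conj_add, ← sum_div, sum_sub_distrib]
  have hnonlin : ∀ j, (G (w j) (u j) * conj (v j)).im = 0 := fun j => by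
    rw [hG, mul_div_right_comm, ← ofReal_ofNat, ← ofReal_div]
    exact im_ofReal_mul_mul_conj _ _
  have hrhs : (∑ j, (-(1 / (2 * (h : ℂ) ^ 2)) *
      ((u (j + 1) - 2 * u j + u (j - 1)) + (w (j + 1) - 2 * w j + w (j - 1)))
        + G (w j) (u j)) * conj (v j)).im = 0 := by
    have hsplit : ∑ j, (-(1 / (2 * (h : ℂ) ^ 2)) *
        ((u (j + 1) - 2 * u j + u (j - 1)) + (w (j + 1) - 2 * w j + w (j - 1)))
          + G (w j) (u j)) * conj (v j)
        = ((-(1 / (2 * h ^ 2)) : ℝ) : ℂ) * ∑ j, (v (j + 1) - 2 * v j + v (j - 1)) * conj (v j)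
          + ∑ j, G (w j) (u j) * conj (v j) := by
      rw [mul_sum, ← sum_add_distrib]
      exact sum_congr rfl fun j _ => by simp only [v, Pi.add_apply]; push_cast; ring
    rw [hsplit, add_im, im_ofReal_mul, im_sum_laplacian_mul_conj, im_sum]
    simp [hnonlin]
  have hdiff : (∑ j, ‖w j‖ ^ 2 - ∑ j, ‖u j‖ ^ 2) / τ = 0 := hlhs.symm.trans (hsum.trans hrhs)
  rwa [div_eq_zero_iff, or_iff_left hτ.ne', sub_eq_zero] at hdiff

theorem stmt_15 (M : ℕ) [NeZero M] (hM : 1 ≤ M) (h τ ε lam : ℝ)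
    (hh : 0 < h) (hτ : 0 < τ) (hε : 0 < ε)
    (G : ℂ → ℂ → ℂ)
    (hG : ∀ z₁ z₂ : ℂ, G z₁ z₂ =
      ((∫ θ in (0:ℝ)..1,
          2 * lam * Real.log (ε + Real.sqrt (θ * ‖z₁‖ ^ 2
            + (1 - θ) * ‖z₂‖ ^ 2))) : ℝ) * (z₁ + z₂) / 2)
    (u w : ZMod M → ℂ)
    (hCN : ∀ j : ZMod M,
      Complex.I * (w j - u j) / (τ : ℂ)
        = -(1 / (2 * (h : ℂ) ^ 2)) *
            ((u (j + 1) - 2 * u j + u (j - 1)) + (w (j + 1) - 2 * w j + w (j - 1)))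
          + G (w j) (u j)) :
    ∑ j : ZMod M, ‖w j‖ ^ 2 = ∑ j : ZMod M, ‖u j‖ ^ 2 :=
  stmt_15_general M h τ ε lam hτ G hG u w hCN
end

section
/- Let M ≥ 1 be an integer, h > 0, τ > 0, ε > 0, λ ∈ ℝ, set f_ε(s) = 2λ·ln(ε + √s), F_ε(ρ) = ∫₀^ρ f_ε(s) ds, and G_ε(z₁,z₂) = (∫₀¹ f_ε(θ|z₁|² + (1−θ)|z₂|²) dθ)·(z₁ + z₂)/2 for z₁, z₂ ∈ ℂ. Suppose u, w : ZMod M → ℂ satisfy the Crank-Nicolson finite difference relation i·(w(j) − u(j))/τ = −(1/(2h²))·((u(j+1) − 2u(j) + u(j−1)) + (w(j+1) − 2w(j) + w(j−1))) + G_ε(w(j), u(j)) for every j ∈ ZMod M. Then the discrete energy E_h(z) = h·∑_{j ∈ ZMod M} |(z(j+1) − z(j))/h|² + h·∑_{j ∈ ZMod M} F_ε(|z(j)|²) is conserved: E_h(w) = E_h(u). -/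
/-!
Multiply the scheme at node `j` by `conj (w j - u j)`, sum over the periodic grid and take real
parts. The time difference gives `i |w j - u j|² / τ`, which is purely imaginary. Summation by
parts turns the averaged discrete Laplacian into `(‖D⁺w‖² - ‖D⁺u‖²) / (2h²)`. In the nonlinear
term `Re ((w + u) conj (w - u)) = |w|² - |u|²`, and the mean of `f_ε` over the segment from `|u|²`
to `|w|²`, times `|w|² - |u|²`, is `F_ε(|w|²) - F_ε(|u|²)`. Multiplying the resulting balance by
`2h` gives `E_h(w) = E_h(u)`.
-/

open Complex ComplexConjugate

theorem integral_comp_segment_mul_sub (f : ℝ → ℝ) (a b : ℝ) :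
    (∫ θ in (0:ℝ)..1, f (θ * b + (1 - θ) * a)) * (b - a) = ∫ s in a..b, f s := by
  rcases eq_or_ne b a with rfl | hba
  · simp
  have hline : (fun θ : ℝ => f (θ * b + (1 - θ) * a)) = fun θ => f ((b - a) * θ + a) := by
    funext θ; ring_nf
  rw [hline, intervalIntegral.integral_comp_mul_add f (sub_ne_zero.mpr hba) a]
  simp only [mul_zero, zero_add, mul_one, sub_add_cancel, smul_eq_mul]
  field_simp

theorem continuous_mul_log_add_sqrt (c : ℝ) {ε : ℝ} (hε : 0 < ε) :
    Continuous fun s : ℝ => c * Real.log (ε + √s) :=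
  continuous_const.mul <| (continuous_const.add Real.continuous_sqrt).log fun s =>
    (add_pos_of_pos_of_nonneg hε (Real.sqrt_nonneg s)).ne'

theorem re_add_mul_conj_sub (a b : ℂ) : ((a + b) * conj (a - b)).re = ‖a‖ ^ 2 - ‖b‖ ^ 2 := by
  simp only [Complex.sq_norm, normSq_apply, mul_re, add_re, add_im, conj_re, conj_im, sub_re,
    sub_im]
  ring

theorem re_I_mul_div_ofReal_mul_conj (z : ℂ) (τ : ℝ) : (I * z / τ * conj z).re = 0 := by
  rw [mul_div_right_comm, mul_assoc, mul_conj]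
  simp [div_re]

theorem re_secant_mul_conj_sub (f : ℝ → ℝ) (hf : Continuous f) (z₁ z₂ : ℂ) :
    (((∫ θ in (0:ℝ)..1, f (θ * ‖z₁‖ ^ 2 + (1 - θ) * ‖z₂‖ ^ 2) : ℝ) : ℂ) * (z₁ + z₂) / 2
        * conj (z₁ - z₂)).re
      = ((∫ s in (0:ℝ)..‖z₁‖ ^ 2, f s) - ∫ s in (0:ℝ)..‖z₂‖ ^ 2, f s) / 2 := by
  rw [intervalIntegral.integral_interval_sub_left (hf.intervalIntegrable _ _)
    (hf.intervalIntegrable _ _), ← integral_comp_segment_mul_sub f (‖z₂‖ ^ 2), mul_div_right_comm,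
    mul_assoc, ← ofReal_ofNat, ← ofReal_div, re_ofReal_mul, re_add_mul_conj_sub]
  ring

section Periodic

variable {M : ℕ} [NeZero M]

theorem sum_secondDiff_mul {R : Type*} [CommRing R] (z y : ZMod M → R) :
    ∑ j, (z (j + 1) - 2 * z j + z (j - 1)) * y j
      = -∑ j, (z (j + 1) - z j) * (y (j + 1) - y j) := by
  have hshift : ∑ j, (z j - z (j - 1)) * y j = ∑ j, (z (j + 1) - z j) * y (j + 1) :=
    (Fintype.sum_equiv (Equiv.addRight 1) _ _ fun j => by simp).symm
  calc ∑ j, (z (j + 1) - 2 * z j + z (j - 1)) * y j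
      = ∑ j, (z (j + 1) - z j) * y j - ∑ j, (z j - z (j - 1)) * y j := by
        rw [← Finset.sum_sub_distrib]; exact Finset.sum_congr rfl fun j _ => by ring
    _ = -∑ j, (z (j + 1) - z j) * (y (j + 1) - y j) := by
        rw [hshift, ← Finset.sum_sub_distrib, ← Finset.sum_neg_distrib]
        exact Finset.sum_congr rfl fun j _ => by ring

theorem re_sum_laplacian_add_mul_conj_sub (u w : ZMod M → ℂ) :
    (∑ j, ((u (j + 1) - 2 * u j + u (j - 1)) + (w (j + 1) - 2 * w j + w (j - 1)))
        * conj (w j - u j)).re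
      = -(∑ j, ‖w (j + 1) - w j‖ ^ 2 - ∑ j, ‖u (j + 1) - u j‖ ^ 2) := by
  have h := sum_secondDiff_mul (fun j => u j + w j) (fun j => conj (w j - u j))
  simp only [← map_sub] at h
  rw [← Finset.sum_sub_distrib, ← Finset.sum_neg_distrib]
  convert congrArg re h using 1
  · congr 1; exact Finset.sum_congr rfl fun j _ => by ring
  · rw [neg_re, re_sum, ← Finset.sum_neg_distrib]
    refine Finset.sum_congr rfl fun j _ => ?_
    rw [← re_add_mul_conj_sub]
    ring_nf

theorem crankNicolson_energy_balance (h τ : ℝ) (u w N : ZMod M → ℂ)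
    (hCN : ∀ j, I * (w j - u j) / (τ : ℂ)
      = -(1 / (2 * (h : ℂ) ^ 2)) *
          ((u (j + 1) - 2 * u j + u (j - 1)) + (w (j + 1) - 2 * w j + w (j - 1))) + N j) :
    (∑ j, ‖w (j + 1) - w j‖ ^ 2 - ∑ j, ‖u (j + 1) - u j‖ ^ 2) / (2 * h ^ 2)
      + (∑ j, N j * conj (w j - u j)).re = 0 := by
  have hzero : (∑ j, I * (w j - u j) / (τ : ℂ) * conj (w j - u j)).re = 0 := by
    rw [re_sum]
    exact Finset.sum_eq_zero fun j _ => re_I_mul_div_ofReal_mul_conj _ _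
  have hsplit : ∑ j, I * (w j - u j) / (τ : ℂ) * conj (w j - u j)
      = ((-(1 / (2 * h ^ 2)) : ℝ) : ℂ) * ∑ j, ((u (j + 1) - 2 * u j + u (j - 1))
          + (w (j + 1) - 2 * w j + w (j - 1))) * conj (w j - u j)
        + ∑ j, N j * conj (w j - u j) := by
    rw [Finset.mul_sum, ← Finset.sum_add_distrib]
    refine Finset.sum_congr rfl fun j _ => ?_
    rw [hCN]
    push_cast
    ring
  rw [hsplit, add_re, re_ofReal_mul, re_sum_laplacian_add_mul_conj_sub] at hzero
  linear_combination hzero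

end Periodic

theorem stmt_16_general (M : ℕ) [NeZero M] (h τ ε lam : ℝ)
    (hε : 0 < ε)
    (F : ℝ → ℝ)
    (hF : ∀ ρ : ℝ, F ρ = ∫ s in (0:ℝ)..ρ, 2 * lam * Real.log (ε + Real.sqrt s))
    (G : ℂ → ℂ → ℂ)
    (hG : ∀ z₁ z₂ : ℂ, G z₁ z₂ =
      ((∫ θ in (0:ℝ)..1,
          2 * lam * Real.log (ε + Real.sqrt (θ * ‖z₁‖ ^ 2
            + (1 - θ) * ‖z₂‖ ^ 2))) : ℝ) * (z₁ + z₂) / 2)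
    (u w : ZMod M → ℂ)
    (hCN : ∀ j : ZMod M,
      Complex.I * (w j - u j) / (τ : ℂ)
        = -(1 / (2 * (h : ℂ) ^ 2)) *
            ((u (j + 1) - 2 * u j + u (j - 1)) + (w (j + 1) - 2 * w j + w (j - 1)))
          + G (w j) (u j)) :
    h * ∑ j : ZMod M, ‖(w (j + 1) - w j) / (h : ℂ)‖ ^ 2
      + h * ∑ j : ZMod M, F (‖w j‖ ^ 2)
    = h * ∑ j : ZMod M, ‖(u (j + 1) - u j) / (h : ℂ)‖ ^ 2
      + h * ∑ j : ZMod M, F (‖u j‖ ^ 2) := by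
  have hnonlin : ∀ j, (G (w j) (u j) * conj (w j - u j)).re
      = (F (‖w j‖ ^ 2) - F (‖u j‖ ^ 2)) / 2 := fun j => by
    rw [hG, hF, hF]
    exact re_secant_mul_conj_sub _ (continuous_mul_log_add_sqrt _ hε) _ _
  have hbalance := crankNicolson_energy_balance h τ u w _ hCN
  simp only [re_sum, hnonlin, ← Finset.sum_div, Finset.sum_sub_distrib] at hbalance
  simp only [norm_div, norm_real, Real.norm_eq_abs, div_pow, sq_abs, ← Finset.sum_div]
  linear_combination (2 * h) * hbalance

theorem stmt_16 (M : ℕ) [NeZero M] (hM : 1 ≤ M) (h τ ε lam : ℝ)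
    (hh : 0 < h) (hτ : 0 < τ) (hε : 0 < ε)
    (F : ℝ → ℝ)
    (hF : ∀ ρ : ℝ, F ρ = ∫ s in (0:ℝ)..ρ, 2 * lam * Real.log (ε + Real.sqrt s))
    (G : ℂ → ℂ → ℂ)
    (hG : ∀ z₁ z₂ : ℂ, G z₁ z₂ =
      ((∫ θ in (0:ℝ)..1,
          2 * lam * Real.log (ε + Real.sqrt (θ * ‖z₁‖ ^ 2
            + (1 - θ) * ‖z₂‖ ^ 2))) : ℝ) * (z₁ + z₂) / 2)
    (u w : ZMod M → ℂ)
    (hCN : ∀ j : ZMod M,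
      Complex.I * (w j - u j) / (τ : ℂ)
        = -(1 / (2 * (h : ℂ) ^ 2)) *
            ((u (j + 1) - 2 * u j + u (j - 1)) + (w (j + 1) - 2 * w j + w (j - 1)))
          + G (w j) (u j)) :
    h * ∑ j : ZMod M, ‖(w (j + 1) - w j) / (h : ℂ)‖ ^ 2
      + h * ∑ j : ZMod M, F (‖w j‖ ^ 2)
    = h * ∑ j : ZMod M, ‖(u (j + 1) - u j) / (h : ℂ)‖ ^ 2
      + h * ∑ j : ZMod M, F (‖u j‖ ^ 2) :=
  stmt_16_general M h τ ε lam hε F hF G hG u w hCN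
end
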